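/- Let d ≥ 1, k > 1, and let f : ℝ^d → ℝ be five times continuously differentiable with ‖D⁵f(x)‖ ≤ M for all x ∈ ℝ^d. Then there exists a constant C (depending only on k and M) such that for every θ ∈ ℝ^d, every unit vector w ∈ ℝ^d, and every c > 0, | ∇f(θ) · w − ( −f(θ + k c w) + k³ f(θ + c w) − k³ f(θ − c w) + f(θ − k c w) ) / ( 2 k (k² − 1) c ) | ≤ C c⁴. -/

import Mathlib

/-!
Along the line `t ↦ θ + t • w` the function `f` becomes a `C⁵` function `g` of one variable with
`g'(0) = ∇f(θ) · w` and `|g⁽⁵⁾| ≤ M`. The four-point stencil is exact on polynomials of degree at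
most four: the even part cancels by symmetry, and the weights `-1, k³` annihilate `t³` while
leaving `2k(k² - 1)c` times the linear coefficient. So its error on `g` is the stencil applied to
the Lagrange remainder of the quartic Taylor polynomial, which is at most `M |t|⁵ / 120` at each
node; dividing by `2k(k² - 1)c` gives the constant `M k²(k² + 1) / (120 (k² - 1))`.
-/

open Set Finset

section Line

variable {𝕜 E F : Type*} [NontriviallyNormedField 𝕜] [NormedAddCommGroup E] [NormedSpace 𝕜 E]
  [NormedAddCommGroup F] [NormedSpace 𝕜 F]

theorem iteratedDeriv_comp_add_smul {n : ℕ} {f : E → F} (hf : ContDiff 𝕜 n f) (θ w : E) (t : 𝕜) :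
    iteratedDeriv n (fun s : 𝕜 => f (θ + s • w)) t =
      iteratedFDeriv 𝕜 n f (θ + t • w) fun _ => w := by
  have hline : (fun s : 𝕜 => f (θ + s • w)) =
      (fun y => f (θ + y)) ∘ ContinuousLinearMap.toSpanSingleton 𝕜 w := rfl
  have hshift : ContDiff 𝕜 n fun y => f (θ + y) := hf.comp (contDiff_const.add contDiff_id)
  rw [iteratedDeriv_eq_iteratedFDeriv, hline,
    ContinuousLinearMap.iteratedFDeriv_comp_right _ hshift t le_rfl, iteratedFDeriv_comp_add_left]
  simp

theorem norm_iteratedDeriv_comp_add_smul_le {n : ℕ} {f : E → F} (hf : ContDiff 𝕜 n f)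
    (θ w : E) (t : 𝕜) :
    ‖iteratedDeriv n (fun s : 𝕜 => f (θ + s • w)) t‖ ≤
      ‖iteratedFDeriv 𝕜 n f (θ + t • w)‖ * ‖w‖ ^ n := by
  rw [iteratedDeriv_comp_add_smul hf]
  simpa using (iteratedFDeriv 𝕜 n f (θ + t • w)).le_opNorm fun _ => w

end Line

theorem taylorWithinEval_univ (g : ℝ → ℝ) (n : ℕ) (x₀ x : ℝ) :
    taylorWithinEval g n univ x₀ x =
      ∑ i ∈ range (n + 1), iteratedDeriv i g x₀ / i.factorial * (x - x₀) ^ i := by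
  simp only [taylor_within_apply, iteratedDerivWithin_univ, smul_eq_mul]
  exact Finset.sum_congr rfl fun i _ => by ring

theorem taylorWithinEval_uIcc_eq_univ {g : ℝ → ℝ} {n : ℕ} (hg : ContDiff ℝ n g) {x₀ x : ℝ}
    (hx : x₀ ≠ x) :
    taylorWithinEval g n (uIcc x₀ x) x₀ x = taylorWithinEval g n univ x₀ x := by
  simp only [taylor_within_apply, iteratedDerivWithin_univ]
  refine Finset.sum_congr rfl fun i hi => ?_
  rw [iteratedDerivWithin_eq_iteratedDeriv (uniqueDiffOn_uIcc hx)
    (hg.contDiffAt.of_le (by exact_mod_cast Nat.lt_succ_iff.mp (mem_range.mp hi)))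
    left_mem_uIcc]

theorem abs_sub_taylorWithinEval_univ_le {g : ℝ → ℝ} {n : ℕ} {M : ℝ}
    (hg : ContDiff ℝ (n + 1) g) (hM : ∀ s, |iteratedDeriv (n + 1) g s| ≤ M) (x₀ x : ℝ) :
    |g x - taylorWithinEval g n univ x₀ x| ≤ M * |x - x₀| ^ (n + 1) / (n + 1).factorial := by
  rcases eq_or_ne x₀ x with rfl | hx
  · simp [taylorWithinEval_self]
  obtain ⟨x', -, hx'⟩ := taylor_mean_remainder_lagrange_iteratedDeriv hx hg.contDiffOn
  rw [← taylorWithinEval_uIcc_eq_univ (hg.of_le (by exact_mod_cast n.le_succ)) hx, hx',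
    abs_div, abs_mul, abs_pow, Nat.abs_cast]
  gcongr
  exact hM x'

noncomputable def fourPointEstimator (g : ℝ → ℝ) (k c : ℝ) : ℝ :=
  (-g (k * c) + k ^ 3 * g c - k ^ 3 * g (-c) + g (-(k * c))) / (2 * k * (k ^ 2 - 1) * c)

theorem fourPointEstimator_sub (g h : ℝ → ℝ) (k c : ℝ) :
    fourPointEstimator (g - h) k c = fourPointEstimator g k c - fourPointEstimator h k c := by
  simp only [fourPointEstimator, Pi.sub_apply]
  ring

theorem fourPointEstimator_quartic (a : ℕ → ℝ) {k c : ℝ} (hk : 1 < k) (hc : c ≠ 0) :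
    fourPointEstimator (fun t => ∑ i ∈ range 5, a i * t ^ i) k c = a 1 := by
  have hk2 : k ^ 2 - 1 ≠ 0 := by nlinarith
  have hk0 : k ≠ 0 := by positivity
  simp only [fourPointEstimator, Finset.sum_range_succ, Finset.sum_range_zero]
  field_simp
  ring

theorem abs_fourPointEstimator_le {h : ℝ → ℝ} {B k c : ℝ} (hk : 1 < k) (hc : 0 < c)
    (hB : ∀ t, |h t| ≤ B * |t| ^ 5) :
    |fourPointEstimator h k c| ≤ B * k ^ 2 * (k ^ 2 + 1) / (k ^ 2 - 1) * c ^ 4 := by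
  have hk2 : 0 < k ^ 2 - 1 := by nlinarith
  have hkc : 0 < k * c := by positivity
  have hnum : |-h (k * c) + k ^ 3 * h c - k ^ 3 * h (-c) + h (-(k * c))| ≤
      2 * B * k ^ 3 * (k ^ 2 + 1) * c ^ 5 := by
    have h₁ := hB (k * c)
    have h₂ := hB c
    have h₃ := hB (-c)
    have h₄ := hB (-(k * c))
    simp only [abs_neg, abs_of_pos hkc, abs_of_pos hc] at h₁ h₂ h₃ h₄
    have hk3 : 0 < k ^ 3 := by positivity
    calc _ ≤ |h (k * c)| + k ^ 3 * |h c| + k ^ 3 * |h (-c)| + |h (-(k * c))| := by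
          grw [abs_add_le, abs_sub, abs_add_le, abs_neg, abs_mul, abs_mul, abs_of_pos hk3]
      _ ≤ B * (k * c) ^ 5 + k ^ 3 * (B * c ^ 5) + k ^ 3 * (B * c ^ 5) + B * (k * c) ^ 5 := by
          gcongr
      _ = 2 * B * k ^ 3 * (k ^ 2 + 1) * c ^ 5 := by ring
  rw [fourPointEstimator, abs_div, abs_of_pos (by positivity : 0 < 2 * k * (k ^ 2 - 1) * c),
    div_le_iff₀ (by positivity)]
  calc _ ≤ 2 * B * k ^ 3 * (k ^ 2 + 1) * c ^ 5 := hnum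
    _ = _ := by field_simp

theorem abs_iteratedDeriv_one_sub_fourPointEstimator_le {g : ℝ → ℝ} {M k c : ℝ}
    (hg : ContDiff ℝ 5 g) (hM : ∀ s, |iteratedDeriv 5 g s| ≤ M) (hk : 1 < k) (hc : 0 < c) :
    |iteratedDeriv 1 g 0 - fourPointEstimator g k c| ≤
      M * k ^ 2 * (k ^ 2 + 1) / (120 * (k ^ 2 - 1)) * c ^ 4 := by
  have hquartic : taylorWithinEval g 4 univ 0 =
      fun t => ∑ i ∈ range 5, iteratedDeriv i g 0 / i.factorial * t ^ i :=
    funext fun t => by rw [taylorWithinEval_univ]; simp only [sub_zero]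
  have htaylor : fourPointEstimator (taylorWithinEval g 4 univ 0) k c = iteratedDeriv 1 g 0 := by
    simp [hquartic, fourPointEstimator_quartic _ hk hc.ne']
  have hremainder : ∀ t, |(g - taylorWithinEval g 4 univ 0) t| ≤ M / 120 * |t| ^ 5 := by
    intro t
    calc _ ≤ M * |t - 0| ^ (4 + 1) / (4 + 1).factorial := abs_sub_taylorWithinEval_univ_le hg hM 0 t
      _ = M / 120 * |t| ^ 5 := by norm_num [Nat.factorial]; ring
  calc |iteratedDeriv 1 g 0 - fourPointEstimator g k c|
      = |fourPointEstimator (g - taylorWithinEval g 4 univ 0) k c| := by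
        rw [fourPointEstimator_sub, htaylor, abs_sub_comm]
    _ ≤ M / 120 * k ^ 2 * (k ^ 2 + 1) / (k ^ 2 - 1) * c ^ 4 :=
        abs_fourPointEstimator_le hk hc hremainder
    _ = M * k ^ 2 * (k ^ 2 + 1) / (120 * (k ^ 2 - 1)) * c ^ 4 := by field_simp

theorem stmt_4_general (d : ℕ) (k M : ℝ) (hk : 1 < k)
    (f : EuclideanSpace ℝ (Fin d) → ℝ) (hf : ContDiff ℝ 5 f)
    (hM : ∀ x : EuclideanSpace ℝ (Fin d), ‖iteratedFDeriv ℝ 5 f x‖ ≤ M) :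
    ∃ C : ℝ, ∀ (θ w : EuclideanSpace ℝ (Fin d)) (c : ℝ), ‖w‖ = 1 → 0 < c →
      |fderiv ℝ f θ w -
        (-f (θ + (k * c) • w) + k ^ 3 * f (θ + c • w) - k ^ 3 * f (θ - c • w)
          + f (θ - (k * c) • w)) / (2 * k * (k ^ 2 - 1) * c)|
        ≤ C * c ^ 4 := by
  refine ⟨M * k ^ 2 * (k ^ 2 + 1) / (120 * (k ^ 2 - 1)), fun θ w c hw hc => ?_⟩
  set g : ℝ → ℝ := fun t => f (θ + t • w)
  have hg : ContDiff ℝ 5 g := hf.comp (contDiff_const.add (contDiff_id.smul contDiff_const))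
  have hg₅ (s : ℝ) : |iteratedDeriv 5 g s| ≤ M := by
    have h := norm_iteratedDeriv_comp_add_smul_le (n := 5) hf θ w s
    rw [hw, one_pow, mul_one, Real.norm_eq_abs] at h
    exact h.trans (hM _)
  have hg₁ : iteratedDeriv 1 g 0 = fderiv ℝ f θ w := by
    rw [iteratedDeriv_comp_add_smul (n := 1) (hf.of_le (by norm_num)), iteratedFDeriv_one_apply]
    simp
  have hestimator : (-f (θ + (k * c) • w) + k ^ 3 * f (θ + c • w) - k ^ 3 * f (θ - c • w)
      + f (θ - (k * c) • w)) / (2 * k * (k ^ 2 - 1) * c) = fourPointEstimator g k c := by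
    simp [fourPointEstimator, g, sub_eq_add_neg, neg_smul]
  rw [← hg₁, hestimator]
  exact abs_iteratedDeriv_one_sub_fourPointEstimator_le hg hg₅ hk hc

/-- The four-point gradient estimator has fourth-order error in `c` for the
directional derivative `∇f(θ)·w`, uniformly over `θ`, unit vectors `w` and scales
`c > 0`, when `f` is `C⁵` with bounded fifth derivative. -/
theorem stmt_4 (d : ℕ) (hd : 1 ≤ d) (k M : ℝ) (hk : 1 < k)
    (f : EuclideanSpace ℝ (Fin d) → ℝ) (hf : ContDiff ℝ 5 f)
    (hM : ∀ x : EuclideanSpace ℝ (Fin d), ‖iteratedFDeriv ℝ 5 f x‖ ≤ M) :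
    ∃ C : ℝ, ∀ (θ w : EuclideanSpace ℝ (Fin d)) (c : ℝ), ‖w‖ = 1 → 0 < c →
      |fderiv ℝ f θ w -
        (-f (θ + (k * c) • w) + k ^ 3 * f (θ + c • w) - k ^ 3 * f (θ - c • w)
          + f (θ - (k * c) • w)) / (2 * k * (k ^ 2 - 1) * c)|
        ≤ C * c ^ 4 :=
  stmt_4_general d k M hk f hf hM
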